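/- arXiv:1204.6286 — 2 statements merged into one kernel-verified Lean document; each statement's English description precedes it below -/
import Mathlib

section
/- The function f(x,y) = 2·φ(x)·φ(y)·Φ(λxy), where φ and Φ are the standard normal pdf and cdf, integrates to 1 over ℝ², i.e., it is a probability density function for every real λ. -/
open Real MeasureTheory

/-- Standard normal pdf. -/
noncomputable def phi (x : ℝ) : ℝ := (Real.sqrt (2 * Real.pi))⁻¹ * Real.exp (-x ^ 2 / 2)

/-- Standard normal cdf. -/
noncomputable def Phi (x : ℝ) : ℝ := ∫ t in Set.Iic x, phi t

open ProbabilityTheory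

/-!
Reflecting `x ↦ -x` preserves `φ(x) φ(y)` and flips the sign of `λ x y`, and `Φ(-t) = 1 - Φ(t)`
because `φ` is even. Hence the substitution turns `∫ 2 φ(x) φ(y) Φ(λ x y)` into
`∫ 2 φ(x) φ(y) (1 - Φ(λ x y))`, so the integral is half of `∫ 2 φ(x) φ(y) = 2`.
This is Azzalini's perturbation argument.
-/

theorem integral_mul_comp_eq_half_integral {α : Type*} [MeasurableSpace α] {μ : Measure α}
    (σ : α ≃ᵐ α) (hσ : MeasurePreserving σ μ μ) {ψ w : α → ℝ} {G : ℝ → ℝ}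
    (hψσ : ∀ x, ψ (σ x) = ψ x) (hwσ : ∀ x, w (σ x) = -w x) (hG : ∀ t, G t + G (-t) = 1)
    (hψ : Integrable ψ μ) (hψG : Integrable (fun x ↦ ψ x * G (w x)) μ) :
    ∫ x, ψ x * G (w x) ∂μ = (∫ x, ψ x ∂μ) / 2 := by
  have hreflect : ∫ x, ψ x * G (w x) ∂μ = ∫ x, ψ x - ψ x * G (w x) ∂μ := by
    rw [← hσ.integral_comp']
    congr 1 with x
    rw [hψσ, hwσ]
    linear_combination ψ x * hG (w x)
  rw [integral_sub hψ hψG] at hreflect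
  linarith

theorem phi_eq_gaussianPDFReal : phi = gaussianPDFReal 0 1 := by
  ext x
  simp [phi, gaussianPDFReal]

theorem phi_nonneg (x : ℝ) : 0 ≤ phi x := by
  rw [phi_eq_gaussianPDFReal]
  exact gaussianPDFReal_nonneg 0 1 x

theorem phi_neg (x : ℝ) : phi (-x) = phi x := by
  rw [phi, neg_sq, phi]

theorem integrable_phi : Integrable phi := by
  rw [phi_eq_gaussianPDFReal]
  exact integrable_gaussianPDFReal 0 1

theorem integral_phi : ∫ x, phi x = 1 := by
  rw [phi_eq_gaussianPDFReal]
  exact integral_gaussianPDFReal_eq_one 0 one_ne_zero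

theorem Phi_add_Phi_neg (x : ℝ) : Phi x + Phi (-x) = 1 := by
  have hIic_neg : ∫ t in Set.Iic (-x), phi t = ∫ t in Set.Ioi x, phi t := by
    simpa only [neg_neg, phi_neg] using integral_comp_neg_Iic (-x) phi
  rw [Phi, Phi, hIic_neg, intervalIntegral.integral_Iic_add_Ioi integrable_phi.integrableOn
    integrable_phi.integrableOn, integral_phi]

theorem Phi_nonneg (x : ℝ) : 0 ≤ Phi x :=
  setIntegral_nonneg measurableSet_Iic fun t _ ↦ phi_nonneg t

theorem Phi_le_one (x : ℝ) : Phi x ≤ 1 := by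
  linarith [Phi_add_Phi_neg x, Phi_nonneg (-x)]

theorem monotone_Phi : Monotone Phi := fun _ _ hab ↦
  setIntegral_mono_set integrable_phi.integrableOn (.of_forall phi_nonneg)
    (.of_forall fun _ ht ↦ Set.Iic_subset_Iic.mpr hab ht)

theorem integrable_mul_Phi_comp {α : Type*} [MeasurableSpace α] {μ : Measure α} {ψ w : α → ℝ}
    (hψ : Integrable ψ μ) (hw : Measurable w) : Integrable (fun x ↦ ψ x * Phi (w x)) μ := by
  refine hψ.mul_bdd (c := 1) (monotone_Phi.measurable.comp hw).aestronglyMeasurable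
    (.of_forall fun x ↦ ?_)
  rw [Real.norm_eq_abs, abs_of_nonneg (Phi_nonneg _)]
  exact Phi_le_one _

theorem integral_phi_mul_phi : ∫ p : ℝ × ℝ, phi p.1 * phi p.2 = 1 := by
  rw [Measure.volume_eq_prod, integral_prod_mul phi phi, integral_phi, one_mul]

theorem skew_bivariate_normal_integrates_to_one (l : ℝ) :
    ∫ p : ℝ × ℝ, 2 * phi p.1 * phi p.2 * Phi (l * p.1 * p.2) = 1 := by
  let σ : ℝ × ℝ ≃ᵐ ℝ × ℝ := (MeasurableEquiv.neg ℝ).prodCongr (MeasurableEquiv.refl ℝ)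
  have hσ : MeasurePreserving σ volume volume :=
    (Measure.measurePreserving_neg volume).prod (MeasurePreserving.id volume)
  have hψ : Integrable (fun p : ℝ × ℝ ↦ 2 * (phi p.1 * phi p.2)) :=
    (integrable_phi.mul_prod integrable_phi).const_mul 2
  have hw : Measurable fun p : ℝ × ℝ ↦ l * p.1 * p.2 := by fun_prop
  have hhalf := integral_mul_comp_eq_half_integral σ hσ (G := Phi) (w := fun p ↦ l * p.1 * p.2)
    (fun p ↦ by simp [σ, MeasurableEquiv.prodCongr, phi_neg])
    (fun p ↦ by simp [σ, MeasurableEquiv.prodCongr]) Phi_add_Phi_neg hψ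
    (integrable_mul_Phi_comp hψ hw)
  calc ∫ p : ℝ × ℝ, 2 * phi p.1 * phi p.2 * Phi (l * p.1 * p.2)
      = ∫ p : ℝ × ℝ, 2 * (phi p.1 * phi p.2) * Phi (l * p.1 * p.2) := by simp only [mul_assoc]
    _ = (∫ p : ℝ × ℝ, 2 * (phi p.1 * phi p.2)) / 2 := hhalf
    _ = 1 := by rw [integral_const_mul, integral_phi_mul_phi]; norm_num
end

section
/- If Z is a standard normal random variable, α > 0, β > 0, and T = β·(αZ/2 + √((αZ/2)² + 1))², then T has density f_T(t) = t^{-3/2}(t+β)/(2√(2π)·α·√β) · exp(−(1/(2α²))(t/β + β/t − 2)) on (0,∞); i.e., this function is the density of the pushforward of the standard normal law under z ↦ β(αz/2 + √((αz/2)²+1))². -/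
/-!
Since `exp (arsinh u) = u + √(u ^ 2 + 1)`, the transformation is `z ↦ b * exp (2 * arsinh (a * z / 2))`,
a bijection of `ℝ` onto `(0, ∞)` with inverse `h t = (2 / a) * sinh (log (t / b) / 2)`
(which is `(√(t / b) - √(b / t)) / a`). The one-dimensional change of variables formula gives the
pushforward density `|h' t| * phi (h t)` on `(0, ∞)`, with `h' t = cosh (log (t / b) / 2) / (a * t)`;
after substituting `t = s ^ 2`, `b = c ^ 2` this is `fBS a b t` by field arithmetic.
-/

open Real MeasureTheory

/-- Birnbaum–Saunders density with shape α and scale β. -/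
noncomputable def fBS (a b t : ℝ) : ℝ :=
  t ^ (-(3:ℝ)/2) * (t + b) / (2 * Real.sqrt (2 * Real.pi) * a * Real.sqrt b) *
    Real.exp (-(1/(2 * a ^ 2)) * (t / b + b / t - 2))

open Set

theorem map_withDensity_eq_withDensity_indicator_of_inverse {g h h' : ℝ → ℝ} {f : ℝ → ENNReal}
    {S : Set ℝ} (hS : MeasurableSet S) (hg : Measurable g) (hgS : ∀ z, g z ∈ S)
    (hhg : Function.LeftInverse h g) (hgh : LeftInvOn g h S)
    (hh' : ∀ t ∈ S, HasDerivWithinAt h (h' t) S t) :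
    (volume.withDensity f).map g =
      volume.withDensity (S.indicator fun t => ENNReal.ofReal |h' t| * f (h t)) := by
  ext s hs
  have hpre : g ⁻¹' s = h '' (s ∩ S) := by
    ext z
    refine ⟨fun hz => ⟨g z, ⟨hz, hgS z⟩, hhg z⟩, ?_⟩
    rintro ⟨t, ⟨hts, htS⟩, rfl⟩
    simpa only [mem_preimage, hgh htS] using hts
  have hsS : MeasurableSet (s ∩ S) := hs.inter hS
  rw [Measure.map_apply hg hs, withDensity_apply _ (hg hs), withDensity_apply _ hs, hpre,
    lintegral_image_eq_lintegral_abs_deriv_mul hsS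
      (fun t ht => (hh' t ht.2).mono inter_subset_right) (hgh.injOn.mono inter_subset_right),
    lintegral_indicator hS, Measure.restrict_restrict hS, inter_comm]

noncomputable def bsTransform (a b z : ℝ) : ℝ := b * exp (2 * arsinh (a * z / 2))

noncomputable def bsInverse (a b t : ℝ) : ℝ := 2 / a * sinh (log (t / b) / 2)

theorem bsTransform_eq (a b z : ℝ) :
    bsTransform a b z = b * (a * z / 2 + √((a * z / 2) ^ 2 + 1)) ^ 2 := by
  rw [bsTransform, mul_comm 2, exp_mul, exp_arsinh, add_comm _ 1]
  norm_cast

theorem measurable_bsTransform (a b : ℝ) : Measurable (bsTransform a b) := by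
  simp only [funext (bsTransform_eq a b)]; fun_prop

theorem rpow_neg_three_halves_sq {s : ℝ} (hs : 0 ≤ s) : (s ^ 2) ^ (-(3:ℝ)/2) = (s ^ 3)⁻¹ := by
  rw [← rpow_natCast, ← rpow_mul hs, ← rpow_natCast, ← rpow_neg hs]
  norm_num

section

variable {a b : ℝ}

theorem bsTransform_pos (hb : 0 < b) (z : ℝ) : 0 < bsTransform a b z := by
  unfold bsTransform; positivity

theorem bsInverse_bsTransform (ha : a ≠ 0) (hb : b ≠ 0) (z : ℝ) :
    bsInverse a b (bsTransform a b z) = z := by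
  rw [bsInverse, bsTransform, mul_div_cancel_left₀ _ hb, log_exp,
    mul_div_cancel_left₀ _ two_ne_zero, sinh_arsinh]
  field_simp

theorem bsTransform_bsInverse (ha : a ≠ 0) (hb : 0 < b) {t : ℝ} (ht : 0 < t) :
    bsTransform a b (bsInverse a b t) = t := by
  have hscale : a * (2 / a * sinh (log (t / b) / 2)) / 2 = sinh (log (t / b) / 2) := by
    field_simp
  rw [bsTransform, bsInverse, hscale, arsinh_sinh, mul_div_cancel₀ _ two_ne_zero,
    exp_log (by positivity)]
  field_simp

theorem hasDerivAt_bsInverse (hb : b ≠ 0) {t : ℝ} (ht : t ≠ 0) :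
    HasDerivAt (bsInverse a b) (cosh (log (t / b) / 2) / (a * t)) t := by
  have h := ((((hasDerivAt_id t).div_const b).log (div_ne_zero ht hb)).div_const 2).sinh.const_mul
    (2 / a)
  refine HasDerivAt.congr_deriv (f := bsInverse a b) h ?_
  simp only [id]
  field_simp

theorem cosh_div_mul_phi_bsInverse {t : ℝ} (ha : 0 < a) (hb : 0 < b) (ht : 0 < t) :
    cosh (log (t / b) / 2) / (a * t) * phi (bsInverse a b t) = fBS a b t := by
  obtain ⟨s, hs, rfl⟩ : ∃ s, 0 < s ∧ t = s ^ 2 := ⟨√t, sqrt_pos.2 ht, (sq_sqrt ht.le).symm⟩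
  obtain ⟨c, hc, rfl⟩ : ∃ c, 0 < c ∧ b = c ^ 2 := ⟨√b, sqrt_pos.2 hb, (sq_sqrt hb.le).symm⟩
  have hlog : log (s ^ 2 / c ^ 2) / 2 = log (s / c) := by
    rw [← div_pow, log_pow]; ring
  rw [bsInverse, hlog, cosh_log (by positivity), sinh_log (by positivity), phi, fBS,
    rpow_neg_three_halves_sq hs.le, sqrt_sq hc.le]
  field_simp
  ring_nf

end

theorem BS_density_of_transformed_normal (a b : ℝ) (ha : 0 < a) (hb : 0 < b) :
    MeasureTheory.Measure.map
        (fun z : ℝ => b * (a * z / 2 + Real.sqrt ((a * z / 2) ^ 2 + 1)) ^ 2)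
        (MeasureTheory.volume.withDensity (fun x => ENNReal.ofReal (phi x)))
      = MeasureTheory.volume.withDensity
          (fun t => ENNReal.ofReal (if 0 < t then fBS a b t else 0)) := by
  simp_rw [← bsTransform_eq]
  rw [map_withDensity_eq_withDensity_indicator_of_inverse measurableSet_Ioi
    (measurable_bsTransform a b) (bsTransform_pos hb) (bsInverse_bsTransform ha.ne' hb.ne')
    (fun t ht => bsTransform_bsInverse ha.ne' hb ht)
    (fun t ht => (hasDerivAt_bsInverse hb.ne' (ne_of_gt ht)).hasDerivWithinAt)]
  congr 1
  ext t
  by_cases ht : 0 < t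
  · have hderiv_pos : 0 < cosh (log (t / b) / 2) / (a * t) := by positivity
    rw [indicator_of_mem (mem_Ioi.2 ht), if_pos ht, abs_of_pos hderiv_pos,
      ← ENNReal.ofReal_mul hderiv_pos.le, cosh_div_mul_phi_bsInverse ha hb ht]
  · rw [indicator_of_notMem (notMem_Ioi.2 (not_lt.1 ht)), if_neg ht, ENNReal.ofReal_zero]
end
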